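/- Let N ≥ 1 and for each i = 1, …, N let a^{(i)} : ℕ → ℝ be a sequence with a^{(i)}_k ≥ 0 for all k and a^{(i)}_0 ≥ 1, and suppose c_i := limsup_{k→∞} (a^{(i)}_k)^{1/k} is finite for every i. Define s_k := Σ_{k_1+⋯+k_N = k} a^{(1)}_{k_1} ⋯ a^{(N)}_{k_N}. Then limsup_{k→∞} s_k^{1/k} = max_{1≤i≤N} c_i. -/

import Mathlib

/-! Each `a i k` is a single term of `s k`: the other factors sit at index `0`, where they are
`≥ 1`. Conversely, for `b > max c i` every `a i k ≤ M i * b ^ k`, so each of the at most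
`(k + 1) ^ N` terms of `s k` is `≤ (∏ M i) * b ^ k`, and the polynomial factor disappears under
the `k`-th root. -/

open Filter Finset

lemma Real.rpow_one_div_natCast_le_iff {x r : ℝ} (hx : 0 ≤ x) (hr : 0 ≤ r) {k : ℕ} (hk : k ≠ 0) :
    x ^ (1 / (k : ℝ)) ≤ r ↔ x ≤ r ^ k := by
  rw [one_div, Real.rpow_inv_le_iff_of_pos hx hr (by positivity), Real.rpow_natCast]

section RootGrowth

variable {u : ℕ → ℝ}

lemma eventually_root_le_of_eventually_le_pow (hu : ∀ k, 0 ≤ u k) {r : ℝ} (hr : 0 ≤ r)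
    (h : ∀ᶠ k in atTop, u k ≤ r ^ k) : ∀ᶠ k : ℕ in atTop, u k ^ (1 / (k : ℝ)) ≤ r := by
  filter_upwards [h, eventually_ne_atTop 0] with k hk hk0
  exact (Real.rpow_one_div_natCast_le_iff (hu k) hr hk0).2 hk

lemma limsup_root_le_of_forall_lt_eventually_le_pow (hu : ∀ k, 0 ≤ u k) {c : ℝ} (hc : 0 ≤ c)
    (h : ∀ r, c < r → ∀ᶠ k in atTop, u k ≤ r ^ k) :
    limsup (fun k : ℕ => u k ^ (1 / (k : ℝ))) atTop ≤ c :=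
  le_of_forall_gt_imp_ge_of_dense fun r hr =>
    limsup_le_of_le (isCoboundedUnder_le_of_le atTop fun k => Real.rpow_nonneg (hu k) _)
      (eventually_root_le_of_eventually_le_pow hu (hc.trans hr.le) (h r hr))

lemma exists_le_mul_pow_of_limsup_root_lt (hu : ∀ k, 0 ≤ u k)
    (hbd : IsBoundedUnder (· ≤ ·) atTop (fun k : ℕ => u k ^ (1 / (k : ℝ)))) {b : ℝ} (hb : 0 < b)
    (h : limsup (fun k : ℕ => u k ^ (1 / (k : ℝ))) atTop < b) :
    ∃ M, ∀ k, u k ≤ M * b ^ k := by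
  have hev : ∀ᶠ k : ℕ in cofinite, u k / b ^ k ≤ 1 := by
    rw [Nat.cofinite_eq_atTop]
    filter_upwards [eventually_lt_of_limsup_lt h hbd, eventually_ne_atTop 0] with k hk hk0
    exact div_le_one_of_le₀ ((Real.rpow_one_div_natCast_le_iff (hu k) hb.le hk0).1 hk.le)
      (by positivity)
  obtain ⟨M, hM⟩ := (isBoundedUnder_of_eventually_le hev).bddAbove_range_of_cofinite
  exact ⟨M, fun k => (div_le_iff₀ (by positivity)).1 (hM ⟨k, rfl⟩)⟩

end RootGrowth

lemma eventually_add_one_pow_mul_mul_pow_le_pow (N : ℕ) (M : ℝ) {b r : ℝ} (hb : 0 < b)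
    (hbr : b < r) : ∀ᶠ k : ℕ in atTop, ((k : ℝ) + 1) ^ N * M * b ^ k ≤ r ^ k := by
  have hr : 0 < r := hb.trans hbr
  have hq : |b / r| < 1 := by rwa [abs_of_pos (by positivity), div_lt_one hr]
  have ht := ((tendsto_pow_const_mul_const_pow_of_abs_lt_one N hq).comp
    (tendsto_add_atTop_nat 1)).const_mul M
  rw [mul_zero] at ht
  filter_upwards [ht.eventually (eventually_le_nhds (by positivity : 0 < b / r))] with k hk
  simp only [Function.comp_apply, Nat.cast_add, Nat.cast_one] at hk
  calc ((k : ℝ) + 1) ^ N * M * b ^ k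
      = M * (((k : ℝ) + 1) ^ N * (b / r) ^ (k + 1)) * (r / b) * r ^ k := by
        rw [div_pow, pow_succ, pow_succ]
        field_simp
    _ ≤ b / r * (r / b) * r ^ k := by gcongr
    _ = r ^ k := by field_simp

lemma card_antidiagonalTuple_le (N k : ℕ) : #(Nat.antidiagonalTuple N k) ≤ (k + 1) ^ N :=
  calc #(Nat.antidiagonalTuple N k)
      ≤ #(Fintype.piFinset fun _ : Fin N => range (k + 1)) := by
        refine card_le_card fun κ hκ => Fintype.mem_piFinset.2 fun i => mem_range_succ_iff.2 ?_
        rw [← Nat.mem_antidiagonalTuple.1 hκ]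
        exact single_le_sum (fun _ _ => Nat.zero_le _) (mem_univ i)
    _ = (k + 1) ^ N := by simp

section MultiCauchyProduct

variable {N : ℕ} {a : Fin N → ℕ → ℝ}

lemma sum_antidiagonalTuple_prod_le_of_le_mul_pow (ha : ∀ i k, 0 ≤ a i k) {M : Fin N → ℝ}
    {b : ℝ} (hb : 0 ≤ b) (hM : ∀ i k, a i k ≤ M i * b ^ k) (k : ℕ) :
    ∑ κ ∈ Nat.antidiagonalTuple N k, ∏ i, a i (κ i) ≤ ((k : ℝ) + 1) ^ N * (∏ i, M i) * b ^ k := by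
  have hM0 : ∀ i, 0 ≤ M i := fun i => by simpa using (ha i 0).trans (hM i 0)
  have hterm : ∀ κ ∈ Nat.antidiagonalTuple N k, ∏ i, a i (κ i) ≤ (∏ i, M i) * b ^ k := by
    intro κ hκ
    calc ∏ i, a i (κ i) ≤ ∏ i, M i * b ^ κ i :=
          prod_le_prod (fun i _ => ha i (κ i)) (fun i _ => hM i (κ i))
      _ = (∏ i, M i) * b ^ k := by
          rw [prod_mul_distrib, prod_pow_eq_pow_sum, Nat.mem_antidiagonalTuple.1 hκ]
  have hcard : (#(Nat.antidiagonalTuple N k) : ℝ) ≤ ((k : ℝ) + 1) ^ N := by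
    exact_mod_cast card_antidiagonalTuple_le N k
  calc ∑ κ ∈ Nat.antidiagonalTuple N k, ∏ i, a i (κ i)
      ≤ #(Nat.antidiagonalTuple N k) * ((∏ i, M i) * b ^ k) := by
        simpa only [nsmul_eq_mul] using sum_le_card_nsmul _ _ _ hterm
    _ ≤ ((k : ℝ) + 1) ^ N * ((∏ i, M i) * b ^ k) := by
        gcongr
        exact mul_nonneg (prod_nonneg fun i _ => hM0 i) (pow_nonneg hb k)
    _ = ((k : ℝ) + 1) ^ N * (∏ i, M i) * b ^ k := by ring

lemma le_sum_antidiagonalTuple_prod (ha : ∀ i k, 0 ≤ a i k) (ha0 : ∀ i, 1 ≤ a i 0)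
    (i : Fin N) (k : ℕ) : a i k ≤ ∑ κ ∈ Nat.antidiagonalTuple N k, ∏ j, a j (κ j) := by
  have hmem : Pi.single i k ∈ Nat.antidiagonalTuple N k := by
    simp [Nat.mem_antidiagonalTuple]
  refine le_trans ?_ (single_le_sum (fun κ _ => prod_nonneg fun j _ => ha j (κ j)) hmem)
  rw [← mul_prod_erase _ _ (mem_univ i), Pi.single_eq_same]
  refine le_mul_of_one_le_right (ha i k) (one_le_prod fun j hj => ?_)
  rw [Pi.single_eq_of_ne (ne_of_mem_erase hj)]
  exact ha0 j

end MultiCauchyProduct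

theorem limsup_root_multiCauchyProduct_eq_max_general
    (N : ℕ) (a : Fin N → ℕ → ℝ)
    (ha : ∀ i k, 0 ≤ a i k) (ha0 : ∀ i, 1 ≤ a i 0)
    (hbd : ∀ i, IsBoundedUnder (· ≤ ·) atTop (fun k : ℕ => a i k ^ (1 / (k : ℝ)))) :
    limsup (fun k : ℕ =>
        (∑ κ ∈ Finset.Nat.antidiagonalTuple N k, ∏ i, a i (κ i)) ^ (1 / (k : ℝ))) atTop
      = ⨆ i : Fin N, limsup (fun k : ℕ => a i k ^ (1 / (k : ℝ))) atTop := by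
  set c : Fin N → ℝ := fun i => limsup (fun k : ℕ => a i k ^ (1 / (k : ℝ))) atTop
  set s : ℕ → ℝ := fun k => ∑ κ ∈ Nat.antidiagonalTuple N k, ∏ i, a i (κ i)
  have hs0 : ∀ k, 0 ≤ s k := fun k => sum_nonneg fun κ _ => prod_nonneg fun i _ => ha i (κ i)
  have hcC : ∀ i, c i ≤ ⨆ i, c i := le_ciSup (Set.finite_range c).bddAbove
  have hC0 : 0 ≤ ⨆ i, c i := Real.iSup_nonneg fun i =>
    le_limsup_of_frequently_le (.of_forall fun k => Real.rpow_nonneg (ha i k) _) (hbd i)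
  have hgrowth : ∀ r, ⨆ i, c i < r → ∀ᶠ k in atTop, s k ≤ r ^ k := by
    intro r hr
    obtain ⟨b, hCb, hbr⟩ := exists_between hr
    have hb : 0 < b := hC0.trans_lt hCb
    choose M hM using fun i =>
      exists_le_mul_pow_of_limsup_root_lt (ha i) (hbd i) hb ((hcC i).trans_lt hCb)
    filter_upwards [eventually_add_one_pow_mul_mul_pow_le_pow N (∏ i, M i) hb hbr] with k hk
    exact (sum_antidiagonalTuple_prod_le_of_le_mul_pow ha hb.le hM k).trans hk
  have hsbd : IsBoundedUnder (· ≤ ·) atTop (fun k : ℕ => s k ^ (1 / (k : ℝ))) :=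
    isBoundedUnder_of_eventually_le <| eventually_root_le_of_eventually_le_pow hs0
      (hC0.trans (lt_add_one _).le) (hgrowth _ (lt_add_one _))
  refine le_antisymm (limsup_root_le_of_forall_lt_eventually_le_pow hs0 hC0 hgrowth) ?_
  refine Real.iSup_le (fun i => limsup_le_limsup ?_ ?_ hsbd)
    (le_limsup_of_frequently_le (.of_forall fun k => Real.rpow_nonneg (hs0 k) _) hsbd)
  · exact .of_forall fun k => Real.rpow_le_rpow (ha i k) (le_sum_antidiagonalTuple_prod ha ha0 i k)
      (by positivity)
  · exact isCoboundedUnder_le_of_le atTop fun k => Real.rpow_nonneg (ha i k) _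

/-- Let `N ≥ 1` and for each `i` let `a i : ℕ → ℝ` be a nonnegative sequence with
`a i 0 ≥ 1` whose `k`-th root growth rate `c i = limsup (a i k) ^ (1/k)` is finite
(i.e. the sequence of roots is bounded above).  Then the multi-fold Cauchy product
`s k = Σ_{k₁+⋯+k_N = k} a 1 k₁ ⋯ a N k_N` satisfies
`limsup (s k) ^ (1/k) = max_i c i`. -/
theorem limsup_root_multiCauchyProduct_eq_max
    (N : ℕ) (hN : 0 < N) (a : Fin N → ℕ → ℝ)
    (ha : ∀ i k, 0 ≤ a i k) (ha0 : ∀ i, 1 ≤ a i 0)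
    (hbd : ∀ i, IsBoundedUnder (· ≤ ·) atTop (fun k : ℕ => a i k ^ (1 / (k : ℝ)))) :
    limsup (fun k : ℕ =>
        (∑ κ ∈ Finset.Nat.antidiagonalTuple N k, ∏ i, a i (κ i)) ^ (1 / (k : ℝ))) atTop
      = ⨆ i : Fin N, limsup (fun k : ℕ => a i k ^ (1 / (k : ℝ))) atTop :=
  limsup_root_multiCauchyProduct_eq_max_general N a ha ha0 hbd
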